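/- arXiv:1304.6765 — 4 statements merged into one kernel-verified Lean document; each statement's English description precedes it below -/
import Mathlib

section
/- For R, R_d ∈ SO(3), define the attitude error vector e_R ∈ ℝ³ by ê_R = (1/2)(R_dᵀR − RᵀR_d), where ˆ· is the isomorphism between ℝ³ and 3×3 skew-symmetric matrices. Then (1/2)‖e_R‖² ≤ Ψ(R,R_d), where Ψ(R,R_d) = (1/2)·tr(I − R_dᵀR). -/
open Matrix
noncomputable section

/-- `SO3 R` : `R` is a rotation matrix. -/
def SO3 (R : Matrix (Fin 3) (Fin 3) ℝ) : Prop := Rᵀ * R = 1 ∧ R.det = 1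

/-- Attitude error function `Ψ(R,R_d) = ½ tr(I − R_dᵀ R)`. -/
def Psi (R Rd : Matrix (Fin 3) (Fin 3) ℝ) : ℝ := (1/2) * (1 - Rdᵀ * R).trace

/-- The hat map identifying `ℝ³` with skew-symmetric matrices. -/
def hat (x : Fin 3 → ℝ) : Matrix (Fin 3) (Fin 3) ℝ :=
  !![0, -x 2, x 1; x 2, 0, -x 0; -x 1, x 0, 0]

/-- The vee map, inverse of the hat map on skew-symmetric matrices. -/
def vee (A : Matrix (Fin 3) (Fin 3) ℝ) : Fin 3 → ℝ := ![A 2 1, A 0 2, A 1 0]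

/-- Attitude error vector `e_R = (½ (R_dᵀ R − Rᵀ R_d))ᵛ`. -/
def eR (R Rd : Matrix (Fin 3) (Fin 3) ℝ) : Fin 3 → ℝ :=
  vee ((1/2 : ℝ) • (Rdᵀ * R - Rᵀ * Rd))

/-- Euclidean dot product on `ℝ³`. -/
def dot (x y : Fin 3 → ℝ) : ℝ := ∑ i, x i * y i

/-- Euclidean norm on `ℝ³`. -/
def enorm3 (x : Fin 3 → ℝ) : ℝ := Real.sqrt (dot x x)

/-- Cross product on `ℝ³`. -/
def cross (x y : Fin 3 → ℝ) : Fin 3 → ℝ :=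
  ![x 1 * y 2 - x 2 * y 1, x 2 * y 0 - x 0 * y 2, x 0 * y 1 - x 1 * y 0]

/-! For `Q ∈ SO(3)` with `t = tr Q`, the cofactor identities
`Q k k = Q i i * Q j j - Q i j * Q j i` for `{i, j, k} = {0, 1, 2}` (from `adj Q = Qᵀ`) and
`∑ Q i j ^ 2 = 3` give `4 ‖(½ (Q - Qᵀ))ᵛ‖² = (3 - t)(1 + t)`. Applied to `Q = R_dᵀ R`, where
`Ψ = (3 - t) / 2`, this is the identity `‖e_R‖² = Ψ (2 - Ψ)`, i.e. `Ψ - ‖e_R‖² / 2 = Ψ² / 2 ≥ 0`. -/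

lemma Matrix.adjugate_eq_transpose_of_transpose_mul_self {n α : Type*} [Fintype n] [DecidableEq n]
    [CommRing α] {A : Matrix n n α} (hA : Aᵀ * A = 1) (hdet : A.det = 1) :
    A.adjugate = Aᵀ := by
  calc A.adjugate = A.adjugate * A * Aᵀ := by
        rw [Matrix.mul_assoc, mul_eq_one_comm.mp hA, Matrix.mul_one]
    _ = Aᵀ := by rw [adjugate_mul, hdet, one_smul, Matrix.one_mul]

lemma SO3.transpose_mul {A B : Matrix (Fin 3) (Fin 3) ℝ} (hA : SO3 A) (hB : SO3 B) :
    SO3 (Aᵀ * B) := by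
  refine ⟨?_, by rw [det_mul, det_transpose, hA.2, hB.2, one_mul]⟩
  calc (Aᵀ * B)ᵀ * (Aᵀ * B) = Bᵀ * (A * Aᵀ) * B := by
        rw [Matrix.transpose_mul, transpose_transpose, Matrix.mul_assoc, Matrix.mul_assoc,
          Matrix.mul_assoc]
    _ = 1 := by rw [mul_eq_one_comm.mp hA.1, Matrix.mul_one, hB.1]

lemma dot_self_nonneg (x : Fin 3 → ℝ) : 0 ≤ dot x x :=
  Finset.sum_nonneg fun i _ => mul_self_nonneg (x i)

lemma enorm3_sq (x : Fin 3 → ℝ) : enorm3 x ^ 2 = dot x x :=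
  Real.sq_sqrt (dot_self_nonneg x)

lemma SO3.enorm3_vee_skew_sq {Q : Matrix (Fin 3) (Fin 3) ℝ} (hQ : SO3 Q) :
    enorm3 (vee ((1/2 : ℝ) • (Q - Qᵀ))) ^ 2 = (3 - Q.trace) * (1 + Q.trace) / 4 := by
  have hadj := congrArg (fun M => (M 0 0, M 1 1, M 2 2))
    (Matrix.adjugate_eq_transpose_of_transpose_mul_self hQ.1 hQ.2)
  simp only [adjugate_fin_three, Prod.mk.injEq, transpose_apply, of_apply, cons_val', cons_val,
    cons_val_zero, cons_val_one, empty_val', cons_val_fin_one] at hadj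
  obtain ⟨h0, h1, h2⟩ := hadj
  have hfrob := congrArg Matrix.trace hQ.1
  simp only [trace_fin_three, mul_apply, Fin.sum_univ_three, transpose_apply, one_apply_eq]
    at hfrob
  rw [enorm3_sq, trace_fin_three]
  simp only [dot, vee, Fin.sum_univ_three, Matrix.smul_apply, Matrix.sub_apply, transpose_apply,
    cons_val, cons_val_zero, cons_val_one, smul_eq_mul]
  linear_combination (1/4 : ℝ) * hfrob + (1/2 : ℝ) * (h0 + h1 + h2)

lemma eR_eq_vee_skew (R Rd : Matrix (Fin 3) (Fin 3) ℝ) :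
    eR R Rd = vee ((1/2 : ℝ) • (Rdᵀ * R - (Rdᵀ * R)ᵀ)) := by
  rw [eR, Matrix.transpose_mul, transpose_transpose]

lemma Psi_eq_three_sub_trace_div_two (R Rd : Matrix (Fin 3) (Fin 3) ℝ) :
    Psi R Rd = (3 - (Rdᵀ * R).trace) / 2 := by
  rw [Psi, trace_sub, trace_one, Fintype.card_fin]
  ring

lemma enorm3_eR_sq {R Rd : Matrix (Fin 3) (Fin 3) ℝ} (hR : SO3 R) (hRd : SO3 Rd) :
    enorm3 (eR R Rd) ^ 2 = Psi R Rd * (2 - Psi R Rd) := by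
  rw [eR_eq_vee_skew, (hRd.transpose_mul hR).enorm3_vee_skew_sq, Psi_eq_three_sub_trace_div_two]
  ring

theorem eR_sq_le_psi (R Rd : Matrix (Fin 3) (Fin 3) ℝ)
    (hR : SO3 R) (hRd : SO3 Rd) :
    (1/2) * enorm3 (eR R Rd) ^ 2 ≤ Psi R Rd := by
  rw [enorm3_eR_sq hR hRd]
  nlinarith [sq_nonneg (Psi R Rd)]
end
end

section
/- Let J be a symmetric positive-definite 3×3 matrix with eigenvalue bounds λ_m, λ_M and let Ω, Ω_d ∈ ℝ³ with e_Ω = Ω − RᵀR_dΩ_d for R, R_d ∈ SO(3). Then JΩ̇ satisfies the identity: if Ω̇ is given by the attitude dynamics JΩ̇ = −Ω×JΩ + M + Δ_R with M = −k_Re_R − k_Ωe_Ω − k_Ie_I + (RᵀR_dΩ_d)×(J RᵀR_dΩ_d) + J RᵀR_d Ω̇_d, and Ṙ = RΩ̂, Ṙ_d = R_dΩ̂_d, then J ė_Ω = (Je_Ω + d)×e_Ω − k_Re_R − k_Ωe_Ω − k_Ie_I + Δ_R, where d = (2J − tr(J)I)RᵀR_dΩ_d. -/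
open Matrix
noncomputable section

/-- Euclidean norm on `ℝ³`. -/
def enorm (x : Fin 3 → ℝ) : ℝ := Real.sqrt (dot x x)

/-! Since `hat (Ω_d) Ω_d = Ω_d × Ω_d = 0` and `hat Ωᵀ = -hat Ω`, the kinematics give
`(RᵀR_dΩ_d)' = -Ω × RᵀR_dΩ_d + RᵀR_dΩ̇_d`. Substituting the dynamics into `J ė_Ω`, the
feedforward term `J RᵀR_dΩ̇_d` cancels, and the three gyroscopic terms regroup into
`(J e_Ω + d) × e_Ω` by the identity `Ja × b + a × Jb = (tr J - J)(a × b)` for symmetric `J`. -/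

theorem cross_eq_crossProduct (x y : Fin 3 → ℝ) : cross x y = x ⨯₃ y := by
  ext i; fin_cases i <;> simp [cross, cross_apply]

theorem hat_mulVec (x y : Fin 3 → ℝ) : hat x *ᵥ y = x ⨯₃ y := by
  ext i; fin_cases i <;> simp [hat, cross_apply, mulVec, dotProduct, Fin.sum_univ_three] <;> ring

theorem hat_transpose (x : Fin 3 → ℝ) : (hat x)ᵀ = -hat x := by
  ext i j; fin_cases i <;> fin_cases j <;> simp [hat]

theorem Matrix.IsSymm.mulVec_cross_add_cross_mulVec {R : Type*} [CommRing R]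
    {J : Matrix (Fin 3) (Fin 3) R} (hJ : J.IsSymm) (a b : Fin 3 → R) :
    (J *ᵥ a) ⨯₃ b + a ⨯₃ (J *ᵥ b) = (J.trace • 1 - J) *ᵥ (a ⨯₃ b) := by
  have h01 := hJ.apply 0 1
  have h02 := hJ.apply 0 2
  have h12 := hJ.apply 1 2
  ext i; fin_cases i <;>
  · simp [cross_apply, mulVec, dotProduct, trace, Fin.sum_univ_three, one_apply, h01, h02, h12]
    ring

theorem Matrix.IsSymm.mulVec_sub_add_mulVec_cross_sub {R : Type*} [CommRing R]
    {J : Matrix (Fin 3) (Fin 3) R} (hJ : J.IsSymm) (x v : Fin 3 → R) :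
    (J *ᵥ (x - v) + ((2 : R) • J - J.trace • 1) *ᵥ v) ⨯₃ (x - v)
      = -(x ⨯₃ (J *ᵥ x)) + v ⨯₃ (J *ᵥ v) + J *ᵥ (x ⨯₃ v) := by
  obtain ⟨e, rfl⟩ : ∃ e, x = e + v := ⟨x - v, by abel⟩
  have key := hJ.mulVec_cross_add_cross_mulVec v e
  simp only [add_sub_cancel_right, sub_mulVec, smul_mulVec, mulVec_add, one_mulVec, map_add,
    map_sub, map_smul, LinearMap.add_apply, LinearMap.sub_apply, LinearMap.smul_apply,
    cross_self, add_zero] at key ⊢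
  rw [← cross_anticomm (J *ᵥ e) e, ← cross_anticomm e (J *ᵥ v), ← cross_anticomm e v] at *
  rw [mulVec_neg] at *
  linear_combination (norm := module) key

section EntrywiseDerivative

variable {l m n : Type*} [Fintype m] {t : ℝ}

theorem hasDerivAt_matrix_mul_apply {A : ℝ → Matrix l m ℝ} {B : ℝ → Matrix m n ℝ}
    {A' : Matrix l m ℝ} {B' : Matrix m n ℝ}
    (hA : ∀ i j, HasDerivAt (fun τ => A τ i j) (A' i j) t)
    (hB : ∀ i j, HasDerivAt (fun τ => B τ i j) (B' i j) t) (i : l) (k : n) :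
    HasDerivAt (fun τ => (A τ * B τ) i k) ((A' * B t + A t * B') i k) t := by
  simp only [mul_apply, Matrix.add_apply, ← Finset.sum_add_distrib]
  exact HasDerivAt.fun_sum fun j _ => (hA i j).fun_mul (hB j k)

theorem hasDerivAt_mulVec_apply {A : ℝ → Matrix l m ℝ} {v : ℝ → m → ℝ}
    {A' : Matrix l m ℝ} {v' : m → ℝ}
    (hA : ∀ i j, HasDerivAt (fun τ => A τ i j) (A' i j) t)
    (hv : ∀ j, HasDerivAt (fun τ => v τ j) (v' j) t) (i : l) :
    HasDerivAt (fun τ => (A τ *ᵥ v τ) i) ((A' *ᵥ v t + A t *ᵥ v') i) t := by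
  simp only [mulVec, dotProduct, Pi.add_apply, ← Finset.sum_add_distrib]
  exact HasDerivAt.fun_sum fun j _ => (hA i j).fun_mul (hv j)

end EntrywiseDerivative

theorem hasDerivAt_transpose_mul_mulVec_apply {R Rd : ℝ → Matrix (Fin 3) (Fin 3) ℝ}
    {Ωd : ℝ → Fin 3 → ℝ} {Ω Ωd' : Fin 3 → ℝ} {t : ℝ}
    (hR : ∀ i j, HasDerivAt (fun τ => R τ i j) ((R t * hat Ω) i j) t)
    (hRd : ∀ i j, HasDerivAt (fun τ => Rd τ i j) ((Rd t * hat (Ωd t)) i j) t)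
    (hΩd : ∀ i, HasDerivAt (fun τ => Ωd τ i) (Ωd' i) t) (i : Fin 3) :
    HasDerivAt (fun τ => (((R τ)ᵀ * Rd τ) *ᵥ Ωd τ) i)
      ((-(Ω ⨯₃ (((R t)ᵀ * Rd t) *ᵥ Ωd t)) + ((R t)ᵀ * Rd t) *ᵥ Ωd') i) t := by
  have hRt : ∀ i j, HasDerivAt (fun τ => (R τ)ᵀ i j) ((R t * hat Ω)ᵀ i j) t :=
    fun i j => hR j i
  convert hasDerivAt_mulVec_apply (hasDerivAt_matrix_mul_apply hRt hRd) hΩd i using 2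
  simp only [transpose_mul, hat_transpose, Matrix.neg_mul, add_mulVec,
    neg_mulVec, ← mulVec_mulVec, hat_mulVec, cross_self, mulVec_zero, add_zero]

theorem attitude_error_dynamics_general
    (J : Matrix (Fin 3) (Fin 3) ℝ) (hJsymm : J.IsSymm)
    (kR kΩ kI : ℝ)
    (eI ΔR : Fin 3 → ℝ)
    (R Rd : ℝ → Matrix (Fin 3) (Fin 3) ℝ) (Ω Ωd Ω' Ωd' : ℝ → Fin 3 → ℝ) (t : ℝ)
    (hR : ∀ s i j, HasDerivAt (fun τ => R τ i j) ((R s * hat (Ω s)) i j) s)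
    (hRd : ∀ s i j, HasDerivAt (fun τ => Rd τ i j) ((Rd s * hat (Ωd s)) i j) s)
    (hΩ : ∀ s i, HasDerivAt (fun τ => Ω τ i) (Ω' s i) s)
    (hΩd : ∀ s i, HasDerivAt (fun τ => Ωd τ i) (Ωd' s i) s)
    (M : Fin 3 → ℝ)
    (hM : M = -(kR • eR (R t) (Rd t)) - kΩ • (Ω t - ((R t)ᵀ * Rd t).mulVec (Ωd t)) - kI • eI
      + cross (((R t)ᵀ * Rd t).mulVec (Ωd t)) (J.mulVec (((R t)ᵀ * Rd t).mulVec (Ωd t)))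
      + J.mulVec (((R t)ᵀ * Rd t).mulVec (Ωd' t)))
    (hdyn : J.mulVec (Ω' t) = -(cross (Ω t) (J.mulVec (Ω t))) + M + ΔR)
    (d : Fin 3 → ℝ)
    (hd : d = ((2 : ℝ) • J - J.trace • (1 : Matrix (Fin 3) (Fin 3) ℝ)).mulVec
      (((R t)ᵀ * Rd t).mulVec (Ωd t))) :
    ∃ eΩ' : Fin 3 → ℝ,
      (∀ i, HasDerivAt (fun τ => (Ω τ - ((R τ)ᵀ * Rd τ).mulVec (Ωd τ)) i) (eΩ' i) t) ∧
      J.mulVec eΩ' =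
        cross (J.mulVec (Ω t - ((R t)ᵀ * Rd t).mulVec (Ωd t)) + d)
            (Ω t - ((R t)ᵀ * Rd t).mulVec (Ωd t))
          - kR • eR (R t) (Rd t) - kΩ • (Ω t - ((R t)ᵀ * Rd t).mulVec (Ωd t))
          - kI • eI + ΔR := by
  set w := ((R t)ᵀ * Rd t) *ᵥ Ωd t
  have hw := hasDerivAt_transpose_mul_mulVec_apply (hR t) (hRd t) (hΩd t)
  refine ⟨Ω' t - (-(Ω t ⨯₃ w) + ((R t)ᵀ * Rd t) *ᵥ Ωd' t), fun i => (hΩ t i).sub (hw i), ?_⟩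
  simp only [cross_eq_crossProduct] at hM hdyn ⊢
  rw [mulVec_sub, hdyn, hM, hd, hJsymm.mulVec_sub_add_mulVec_cross_sub, mulVec_add, mulVec_neg]
  abel

theorem attitude_error_dynamics
    (J : Matrix (Fin 3) (Fin 3) ℝ) (hJsymm : J.IsSymm) (hJpos : J.PosDef)
    (lm lM : ℝ) (hl : 0 < lm ∧ lm ≤ lM)
    (hRayleigh : ∀ x : Fin 3 → ℝ, lm * dot x x ≤ dot x (J.mulVec x) ∧
      dot x (J.mulVec x) ≤ lM * dot x x)
    (kR kΩ kI : ℝ) (hkR : 0 < kR) (hkΩ : 0 < kΩ) (hkI : 0 < kI)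
    (eI ΔR : Fin 3 → ℝ)
    (R Rd : ℝ → Matrix (Fin 3) (Fin 3) ℝ) (Ω Ωd Ω' Ωd' : ℝ → Fin 3 → ℝ) (t : ℝ)
    (hSO : ∀ s, SO3 (R s)) (hSOd : ∀ s, SO3 (Rd s))
    (hR : ∀ s i j, HasDerivAt (fun τ => R τ i j) ((R s * hat (Ω s)) i j) s)
    (hRd : ∀ s i j, HasDerivAt (fun τ => Rd τ i j) ((Rd s * hat (Ωd s)) i j) s)
    (hΩ : ∀ s i, HasDerivAt (fun τ => Ω τ i) (Ω' s i) s)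
    (hΩd : ∀ s i, HasDerivAt (fun τ => Ωd τ i) (Ωd' s i) s)
    (M : Fin 3 → ℝ)
    (hM : M = -(kR • eR (R t) (Rd t)) - kΩ • (Ω t - ((R t)ᵀ * Rd t).mulVec (Ωd t)) - kI • eI
      + cross (((R t)ᵀ * Rd t).mulVec (Ωd t)) (J.mulVec (((R t)ᵀ * Rd t).mulVec (Ωd t)))
      + J.mulVec (((R t)ᵀ * Rd t).mulVec (Ωd' t)))
    (hdyn : J.mulVec (Ω' t) = -(cross (Ω t) (J.mulVec (Ω t))) + M + ΔR)
    (d : Fin 3 → ℝ)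
    (hd : d = ((2 : ℝ) • J - J.trace • (1 : Matrix (Fin 3) (Fin 3) ℝ)).mulVec
      (((R t)ᵀ * Rd t).mulVec (Ωd t))) :
    ∃ eΩ' : Fin 3 → ℝ,
      (∀ i, HasDerivAt (fun τ => (Ω τ - ((R τ)ᵀ * Rd τ).mulVec (Ωd τ)) i) (eΩ' i) t) ∧
      J.mulVec eΩ' =
        cross (J.mulVec (Ω t - ((R t)ᵀ * Rd t).mulVec (Ωd t)) + d)
            (Ω t - ((R t)ᵀ * Rd t).mulVec (Ωd t))
          - kR • eR (R t) (Rd t) - kΩ • (Ω t - ((R t)ᵀ * Rd t).mulVec (Ωd t))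
          - kI • eI + ΔR :=
  attitude_error_dynamics_general J hJsymm kR kΩ kI eI ΔR R Rd Ω Ωd Ω' Ωd' t hR hRd hΩ hΩd M hM hdyn
    d hd
end
end

section
/- Define the scalar saturation function sat_σ(y) = σ if y > σ, y if −σ ≤ y ≤ σ, −σ if y < −σ, for σ > 0, applied componentwise to vectors in ℝ³. If k_iσ > δ_x ≥ ‖Δ_x‖_∞ for a fixed vector Δ_x ∈ ℝ³, then the function V(e_i) = ∫ from Δ_x/k_i to e_i of (k_i·sat_σ(μ) − Δ_x)·dμ (taken componentwise along straight segments) is nonnegative, and V(e_i) = 0 iff e_i = Δ_x/k_i. -/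
open Matrix
noncomputable section

/-- Scalar saturation function: clamp to `[-σ, σ]`. -/
def sat (σ y : ℝ) : ℝ := max (-σ) (min σ y)

/-!
Since `k σ > δ ≥ |Δ_j|`, the point `a_j = Δ_j / k` lies strictly inside the linear range
`(-σ, σ)` of the saturation, and `sat σ` is monotone, so the integrand `k sat σ s - Δ_j`
is negative for `s < a_j` and positive for `s > a_j`. An integral starting at the unique sign
change of a continuous integrand is positive unless its interval is degenerate; summing over
the components gives the claim.
-/

open intervalIntegral

theorem continuous_sat (σ : ℝ) : Continuous (sat σ) := by
  unfold sat
  fun_prop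

theorem lt_sat_of_lt {σ a s : ℝ} (haσ : a < σ) (has : a < s) : a < sat σ s :=
  (lt_min haσ has).trans_le (le_max_right _ _)

theorem sat_lt_of_lt {σ a s : ℝ} (haσ : -σ < a) (hsa : s < a) : sat σ s < a :=
  max_lt haσ ((min_le_right _ _).trans_lt hsa)

theorem integral_pos_of_sign_change {f : ℝ → ℝ} {a e : ℝ} (hf : Continuous f)
    (hneg : ∀ s < a, f s < 0) (hpos : ∀ s, a < s → 0 < f s) (he : e ≠ a) :
    0 < ∫ s in a..e, f s := by
  rcases he.lt_or_gt with hea | hae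
  · have : 0 < ∫ s in e..a, -f s :=
      intervalIntegral_pos_of_pos_on (hf.neg.intervalIntegrable _ _)
        (fun s hs => neg_pos.mpr (hneg s hs.2)) hea
    rwa [integral_neg, neg_pos, ← neg_pos, ← integral_symm] at this
  · exact intervalIntegral_pos_of_pos_on (hf.intervalIntegrable _ _)
      (fun s hs => hpos s hs.1) hae

theorem integral_nonneg_of_sign_change {f : ℝ → ℝ} {a : ℝ} (hf : Continuous f)
    (hneg : ∀ s < a, f s < 0) (hpos : ∀ s, a < s → 0 < f s) (e : ℝ) :
    0 ≤ ∫ s in a..e, f s := by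
  rcases eq_or_ne e a with rfl | he
  · rw [integral_same]
  · exact (integral_pos_of_sign_change hf hneg hpos he).le

theorem integral_eq_zero_iff_of_sign_change {f : ℝ → ℝ} {a : ℝ} (hf : Continuous f)
    (hneg : ∀ s < a, f s < 0) (hpos : ∀ s, a < s → 0 < f s) (e : ℝ) :
    ∫ s in a..e, f s = 0 ↔ e = a := by
  refine ⟨fun h => ?_, fun h => h ▸ integral_same⟩
  by_contra he
  exact (integral_pos_of_sign_change hf hneg hpos he).ne' h

section SaturatedIntegrand

variable {k σ d : ℝ}

theorem abs_div_lt_of_abs_lt_mul (hk : 0 < k) (hd : |d| < k * σ) : |d / k| < σ := by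
  rw [abs_div, abs_of_pos hk, div_lt_iff₀ hk, mul_comm]
  exact hd

theorem mul_sat_sub_neg (hk : 0 < k) (hd : |d| < k * σ) {s : ℝ} (hs : s < d / k) :
    k * sat σ s - d < 0 := by
  have := sat_lt_of_lt (abs_lt.mp (abs_div_lt_of_abs_lt_mul hk hd)).1 hs
  rw [lt_div_iff₀ hk] at this
  linarith

theorem mul_sat_sub_pos (hk : 0 < k) (hd : |d| < k * σ) {s : ℝ} (hs : d / k < s) :
    0 < k * sat σ s - d := by
  have := lt_sat_of_lt (abs_lt.mp (abs_div_lt_of_abs_lt_mul hk hd)).2 hs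
  rw [div_lt_iff₀ hk] at this
  linarith

end SaturatedIntegrand

theorem integral_term_posdef_general (ki σ δx : ℝ) (hki : 0 < ki)
    (Δx : Fin 3 → ℝ) (hΔ : ∀ j, |Δx j| ≤ δx) (hsat : δx < ki * σ)
    (V : (Fin 3 → ℝ) → ℝ)
    (hV : V = fun e => ∑ j, ∫ s in (Δx j / ki)..(e j), (ki * sat σ s - Δx j)) :
    (∀ e, 0 ≤ V e) ∧ (∀ e, V e = 0 ↔ e = fun j => Δx j / ki) := by
  have hcont : ∀ j, Continuous fun s => ki * sat σ s - Δx j :=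
    fun j => (continuous_const.mul (continuous_sat σ)).sub continuous_const
  have hd : ∀ j, |Δx j| < ki * σ := fun j => (hΔ j).trans_lt hsat
  have hneg : ∀ j, ∀ s < Δx j / ki, ki * sat σ s - Δx j < 0 :=
    fun j _ => mul_sat_sub_neg hki (hd j)
  have hpos : ∀ j s, Δx j / ki < s → 0 < ki * sat σ s - Δx j :=
    fun j _ => mul_sat_sub_pos hki (hd j)
  have hnonneg : ∀ e j, 0 ≤ ∫ s in (Δx j / ki)..e, (ki * sat σ s - Δx j) :=
    fun e j => integral_nonneg_of_sign_change (hcont j) (hneg j) (hpos j) e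
  subst hV
  refine ⟨fun e => Finset.sum_nonneg fun j _ => hnonneg (e j) j, fun e => ?_⟩
  rw [Finset.sum_eq_zero_iff_of_nonneg fun j _ => hnonneg (e j) j, funext_iff]
  simp only [Finset.mem_univ, true_implies]
  exact forall_congr' fun j =>
    integral_eq_zero_iff_of_sign_change (hcont j) (hneg j) (hpos j) (e j)

theorem integral_term_posdef (ki σ δx : ℝ) (hki : 0 < ki) (hσ : 0 < σ) (hδ : 0 < δx)
    (Δx : Fin 3 → ℝ) (hΔ : ∀ j, |Δx j| ≤ δx) (hsat : δx < ki * σ)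
    (V : (Fin 3 → ℝ) → ℝ)
    (hV : V = fun e => ∑ j, ∫ s in (Δx j / ki)..(e j), (ki * sat σ s - Δx j)) :
    (∀ e, 0 ≤ V e) ∧ (∀ e, V e = 0 ↔ e = fun j => Δx j / ki) :=
  integral_term_posdef_general ki σ δx hki Δx hΔ hsat V hV
end
end

section
/- Let m, k_x, k_v, c₁ > 0 and 0 ≤ α < 1. If c₁ < min{ 4k_xk_v(1−α)²/(k_v²(1+α)² + 4mk_x(1−α)), √(k_x/m) }, then both matrices M₁₁ = (1/2)[[k_x, −mc₁],[−mc₁, m]] and W₁ = [[c₁k_x(1−α), −(c₁k_v/2)(1+α)],[−(c₁k_v/2)(1+α), k_v(1−α) − mc₁]] are positive definite. -/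
open Matrix
noncomputable section

/-! Both matrices are symmetric `2 × 2`, so positive definiteness reduces to a positive corner
entry and a positive determinant. For `M₁₁` the determinant condition is `m c₁² < k_x`, i.e.
`c₁ < √(k_x / m)`; for `W₁` the determinant equals
`(c₁ / 4) (4 k_x k_v (1 - α)² - c₁ (k_v² (1 + α)² + 4 m k_x (1 - α)))`, which is positive
exactly under the first bound on `c₁`. -/

theorem Matrix.posDef_fin_two_of_pos_of_sq_lt {a b c : ℝ} (ha : 0 < a) (hdet : b ^ 2 < a * c) :
    (!![a, b; b, c]).PosDef := by
  rw [posDef_iff_dotProduct_mulVec]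
  refine ⟨by ext i j; fin_cases i <;> fin_cases j <;> rfl, fun x hx => ?_⟩
  have hquad : star x ⬝ᵥ (!![a, b; b, c] *ᵥ x) = a * x 0 ^ 2 + 2 * b * x 0 * x 1 + c * x 1 ^ 2 := by
    simp only [star_trivial, dotProduct, mulVec, Fin.sum_univ_two, of_apply, cons_val',
      cons_val_zero, cons_val_one, empty_val', cons_val_fin_one]
    ring
  have hsquare : a * (a * x 0 ^ 2 + 2 * b * x 0 * x 1 + c * x 1 ^ 2) =
      (a * x 0 + b * x 1) ^ 2 + (a * c - b ^ 2) * x 1 ^ 2 := by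
    ring
  have hpos : 0 < (a * x 0 + b * x 1) ^ 2 + (a * c - b ^ 2) * x 1 ^ 2 := by
    rcases eq_or_ne (x 1) 0 with h1 | h1
    · have h0 : x 0 ≠ 0 := fun h0 => hx (by ext i; fin_cases i <;> simp [h0, h1])
      simpa [h1] using sq_pos_of_ne_zero (mul_ne_zero ha.ne' h0)
    · have := sub_pos.mpr hdet
      positivity
  rw [hquad]
  exact pos_of_mul_pos_right (hsquare ▸ hpos) ha.le

theorem posDef_translational_energy_matrix {m kx c1 : ℝ} (hm : 0 < m) (hc1 : m * c1 ^ 2 < kx) :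
    (!![kx, -m * c1; -m * c1, m]).PosDef :=
  posDef_fin_two_of_pos_of_sq_lt (by nlinarith [sq_nonneg c1]) (by nlinarith)

theorem posDef_translational_dissipation_matrix {m kx kv c1 α : ℝ} (hkx : 0 < kx)
    (hc1pos : 0 < c1) (hα1 : α < 1)
    (hc1 : c1 * (kv ^ 2 * (1 + α) ^ 2 + 4 * m * kx * (1 - α)) < 4 * kx * kv * (1 - α) ^ 2) :
    (!![c1 * kx * (1 - α), -(c1 * kv / 2) * (1 + α);
        -(c1 * kv / 2) * (1 + α), kv * (1 - α) - m * c1]).PosDef := by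
  have hdet : c1 * kx * (1 - α) * (kv * (1 - α) - m * c1) - (-(c1 * kv / 2) * (1 + α)) ^ 2 =
      c1 / 4 * (4 * kx * kv * (1 - α) ^ 2 - c1 * (kv ^ 2 * (1 + α) ^ 2 + 4 * m * kx * (1 - α))) := by
    ring
  refine posDef_fin_two_of_pos_of_sq_lt (by have := sub_pos.mpr hα1; positivity) ?_
  nlinarith [mul_pos hc1pos (sub_pos.mpr hc1)]

theorem translational_gain_matrices_posdef_general
    (m kx kv c1 α : ℝ) (hm : 0 < m) (hkx : 0 < kx)
    (hc1pos : 0 < c1) (hα1 : α < 1)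
    (hc1 : c1 < min (4 * kx * kv * (1 - α) ^ 2 / (kv ^ 2 * (1 + α) ^ 2 + 4 * m * kx * (1 - α)))
      (Real.sqrt (kx / m))) :
    ((1/2 : ℝ) • !![kx, -m * c1; -m * c1, m]).PosDef ∧
    (!![c1 * kx * (1 - α), -(c1 * kv / 2) * (1 + α);
        -(c1 * kv / 2) * (1 + α), kv * (1 - α) - m * c1]).PosDef := by
  obtain ⟨hc1_dissipation, hc1_sqrt⟩ := lt_min_iff.mp hc1
  have hden : 0 < kv ^ 2 * (1 + α) ^ 2 + 4 * m * kx * (1 - α) := by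
    have := sub_pos.mpr hα1
    positivity
  have hc1_energy : m * c1 ^ 2 < kx := by
    rw [← lt_div_iff₀' hm]
    exact (Real.lt_sqrt hc1pos.le).mp hc1_sqrt
  exact ⟨(posDef_translational_energy_matrix hm hc1_energy).smul (by norm_num),
    posDef_translational_dissipation_matrix hkx hc1pos hα1 ((lt_div_iff₀ hden).mp hc1_dissipation)⟩

theorem translational_gain_matrices_posdef
    (m kx kv c1 α : ℝ) (hm : 0 < m) (hkx : 0 < kx) (hkv : 0 < kv)
    (hc1pos : 0 < c1) (hα0 : 0 ≤ α) (hα1 : α < 1)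
    (hc1 : c1 < min (4 * kx * kv * (1 - α) ^ 2 / (kv ^ 2 * (1 + α) ^ 2 + 4 * m * kx * (1 - α)))
      (Real.sqrt (kx / m))) :
    ((1/2 : ℝ) • !![kx, -m * c1; -m * c1, m]).PosDef ∧
    (!![c1 * kx * (1 - α), -(c1 * kv / 2) * (1 + α);
        -(c1 * kv / 2) * (1 + α), kv * (1 - α) - m * c1]).PosDef :=
  translational_gain_matrices_posdef_general m kx kv c1 α hm hkx hc1pos hα1 hc1
end
end
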